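/- arXiv:1606.06548 — 3 statements merged into one kernel-verified Lean document; each statement's English description precedes it below -/
import Mathlib

section
/- (Symplectic Suslin's Lemma) Let B be a commutative ring, n ≥ 1, and w, u, v ∈ B^{2n} with coordinates indexed by {−n,…,−1,1,…,n}. Suppose ⟨w,u⟩ = A ∈ B and ⟨u,v⟩ = 0, where ⟨x,y⟩ = Σ_{i>0} (x_i y_{−i} − x_{−i} y_i) is the standard symplectic form. For distinct indices i, j define v_{ij} = (e_i u_{−j} sign(j) − e_j u_{−i} sign(i))·(v_i w_j − v_j w_i), where e_k is the k-th standard basis vector and sign(k) = ±1 according to the sign of k. Then: (1) v_{ij} = v_{ji}; (2) ⟨u, v_{ij}⟩ = 0 for all i ≠ j; (3) Σ_{i<j} v_{ij} = vA. -/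
open Finset

/-- Index set {-n,…,-1,1,…,n}: `(k, true)` stands for `k+1`, `(k, false)` for `-(k+1)`. -/
abbrev Idx (n : ℕ) := Fin n × Bool

/-- The negative of an index. -/
def Idx.neg {n : ℕ} (i : Idx n) : Idx n := (i.1, !i.2)

/-- The sign of an index, as an element of `R`. -/
def Idx.sgn {n : ℕ} (R : Type*) [Ring R] (i : Idx n) : R := if i.2 then 1 else -1

/-- The integer represented by an index. -/
def Idx.toInt {n : ℕ} (i : Idx n) : ℤ := if i.2 then (i.1 : ℤ) + 1 else -((i.1 : ℤ) + 1)

variable {R : Type*} [CommRing R] {n : ℕ}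

/-- The standard symplectic form on `R^{2n}`: ⟨x,y⟩ = Σ_{i>0} (x_i y_{-i} - x_{-i} y_i). -/
def sform (x y : Idx n → R) : R :=
  ∑ k : Fin n, (x (k, true) * y (k, false) - x (k, false) * y (k, true))

/-- The standard basis vector `e_i`. -/
def evec (i : Idx n) : Idx n → R := fun j => if j = i then (1 : R) else 0

/-- The vector v_{ij} = (e_i u_{-j} sign j - e_j u_{-i} sign i)(v_i w_j - v_j w_i). -/
def vv (u v w : Idx n → R) (i j : Idx n) : Idx n → R :=
  fun l => (evec i l * u (Idx.neg j) * Idx.sgn R j - evec j l * u (Idx.neg i) * Idx.sgn R i) *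
    (v i * w j - v j * w i)

lemma toInt_inj : Function.Injective (Idx.toInt (n := n)) := by
  rintro ⟨a, b⟩ ⟨c, d⟩ h
  cases b <;> cases d <;> simp [Idx.toInt] at h <;>
    first
      | (exfalso; omega)
      | (have : a = c := by omega
         simp [this])

lemma sform_evec (x : Idx n → R) (i : Idx n) :
    sform x (evec i) = -(Idx.sgn R i) * x (Idx.neg i) := by
  obtain ⟨m, b⟩ := i
  rw [sform, Finset.sum_eq_single m]
  · cases b <;> simp [evec, Idx.sgn, Idx.neg]
  · intro k _ hk
    cases b <;> simp [evec, Prod.ext_iff, hk]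
  · simp

lemma sum_sgn_neg (x u : Idx n → R) :
    (∑ j : Idx n, Idx.sgn R j * u (Idx.neg j) * x j) = sform x u := by
  rw [Fintype.sum_prod_type, sform]
  refine Finset.sum_congr rfl fun k _ => ?_
  simp [Idx.sgn, Idx.neg]
  ring

/-- Symplectic Suslin's Lemma. -/
theorem symplectic_suslin_lemma (u v w : Idx n → R) (A : R)
    (hA : sform w u = A) (huv : sform u v = 0) :
    (∀ i j : Idx n, i ≠ j → vv u v w i j = vv u v w j i) ∧
    (∀ i j : Idx n, i ≠ j → sform u (vv u v w i j) = 0) ∧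
    (∀ l : Idx n,
      (∑ p ∈ Finset.univ.filter (fun p : Idx n × Idx n => p.1.toInt < p.2.toInt),
        vv u v w p.1 p.2 l) = v l * A) := by
  refine ⟨?_, ?_, ?_⟩
  · intro i j _
    funext l
    simp only [vv]
    ring
  · intro i j _
    have h : sform u (vv u v w i j) =
        (u (Idx.neg j) * Idx.sgn R j * (v i * w j - v j * w i)) * sform u (evec i)
        - (u (Idx.neg i) * Idx.sgn R i * (v i * w j - v j * w i)) * sform u (evec j) := by
      simp only [sform, vv, Finset.mul_sum, ← Finset.sum_sub_distrib]
      refine Finset.sum_congr rfl fun k _ => ?_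
      ring
    rw [h, sform_evec, sform_evec]
    ring
  · intro l
    set g : Idx n → R := fun j => Idx.sgn R j * u (Idx.neg j) * (v l * w j - v j * w l) with hg
    have hgl : g l = 0 := by simp [hg]
    have key : ∀ i j : Idx n, vv u v w i j l =
        (if i = l then g j else 0) + (if j = l then g i else 0) := by
      intro i j
      simp only [vv, evec, hg]
      rcases eq_or_ne l i with hi | hi
      · subst hi
        rcases eq_or_ne l j with hj | hj
        · subst hj
          simp only [if_pos rfl, if_true]
          ring_nf
          try simp
        · simp only [if_pos rfl, if_neg hj, if_neg (Ne.symm hj), if_true]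
          ring_nf
          try simp
      · rcases eq_or_ne l j with hj | hj
        · subst hj
          simp only [if_pos rfl, if_neg hi, if_neg (Ne.symm hi), if_true]
          ring_nf
          try simp
        · simp only [if_neg hi, if_neg hj, if_neg (Ne.symm hi), if_neg (Ne.symm hj)]
          ring
    calc (∑ p ∈ Finset.univ.filter (fun p : Idx n × Idx n => p.1.toInt < p.2.toInt),
            vv u v w p.1 p.2 l)
        = ∑ p : Idx n × Idx n, (if p.1.toInt < p.2.toInt then
            ((if p.1 = l then g p.2 else 0) + (if p.2 = l then g p.1 else 0)) else 0) := by
          rw [Finset.sum_filter]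
          exact Finset.sum_congr rfl fun p _ => by rw [key]
      _ = ∑ j : Idx n, g j := by
          rw [Fintype.sum_prod_type]
          have step : ∀ i : Idx n, (∑ j : Idx n, (if i.toInt < j.toInt then
              ((if i = l then g j else 0) + (if j = l then g i else 0)) else 0)) =
              (if i = l then (∑ j : Idx n, if i.toInt < j.toInt then g j else 0) else 0)
              + (if i.toInt < l.toInt then g i else 0) := by
            intro i
            rw [show (if i = l then (∑ j : Idx n, if i.toInt < j.toInt then g j else 0) else 0)
              = ∑ j : Idx n, (if i = l then (if i.toInt < j.toInt then g j else 0) else 0) by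
                split <;> simp]
            rw [show (if i.toInt < l.toInt then g i else 0)
              = ∑ j : Idx n, (if j = l then (if i.toInt < j.toInt then g i else 0) else 0) by
                rw [Finset.sum_ite_eq' Finset.univ l
                  (fun j => if i.toInt < j.toInt then g i else 0)]
                simp]
            rw [← Finset.sum_add_distrib]
            refine Finset.sum_congr rfl fun j _ => ?_
            by_cases hij : i.toInt < j.toInt <;>
              by_cases hi : i = l <;> by_cases hj : j = l <;> simp [hij, hi, hj]
          rw [Finset.sum_congr rfl fun i _ => step i, Finset.sum_add_distrib,
            Finset.sum_ite_eq' Finset.univ l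
              (fun i => ∑ j : Idx n, if i.toInt < j.toInt then g j else 0)]
          simp only [Finset.mem_univ, if_true]
          rw [← Finset.sum_add_distrib]
          refine Finset.sum_congr rfl fun j _ => ?_
          by_cases hjl : j = l
          · subst hjl; simp [hgl]
          · have hne : j.toInt ≠ l.toInt := fun h => hjl (toInt_inj h)
            rcases lt_or_gt_of_ne hne with h | h
            · simp [h, not_lt.mpr h.le]
            · simp [h, not_lt.mpr h.le]
      _ = v l * A := by
          have h1 : (∑ j : Idx n, Idx.sgn R j * u (Idx.neg j) * w j) = A := by
            rw [sum_sgn_neg]; exact hA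
          have h2 : (∑ j : Idx n, Idx.sgn R j * u (Idx.neg j) * v j) = 0 := by
            rw [sum_sgn_neg]
            have hvu : sform v u + sform u v = 0 := by
              simp only [sform, ← Finset.sum_add_distrib]
              exact Finset.sum_eq_zero fun k _ => by ring
            linear_combination hvu - huv
          calc (∑ j : Idx n, g j)
              = v l * (∑ j : Idx n, Idx.sgn R j * u (Idx.neg j) * w j)
                - w l * (∑ j : Idx n, Idx.sgn R j * u (Idx.neg j) * v j) := by
                rw [Finset.mul_sum, Finset.mul_sum, ← Finset.sum_sub_distrib]
                exact Finset.sum_congr rfl fun j _ => by simp [hg]; ring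
            _ = v l * A := by rw [h1, h2]; ring
end

section
/- Let R be a commutative ring, u, v_1, v_2 ∈ R^{2n}, a_1, a_2 ∈ R with ⟨u,v_1⟩ = ⟨u,v_2⟩ = 0. Then the ESD-transformations satisfy the additivity relation T(u, v_1, a_1)·T(u, v_2, a_2) = T(u, v_1 + v_2, a_1 + a_2 + ⟨v_1, v_2⟩). -/
open Finset

variable {R : Type*} [CommRing R] {n : ℕ}

/-- The ESD-transformation `T(u,v,a) : w ↦ w + u(⟨v,w⟩ + a⟨u,w⟩) + v⟨u,w⟩`. -/
def Tesd (u v : Idx n → R) (a : R) : (Idx n → R) → (Idx n → R) :=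
  fun w l => w l + u l * (sform v w + a * sform u w) + v l * sform u w


lemma sform_expand (w x u v : Idx n → R) (c d : R) :
    sform w (fun l => x l + u l * c + v l * d) =
      sform w x + sform w u * c + sform w v * d := by
  simp only [sform, Finset.sum_mul, ← Finset.sum_add_distrib]
  exact Finset.sum_congr rfl fun k _ => by ring

lemma sform_self (u : Idx n → R) : sform u u = 0 := by
  simp [sform, mul_comm]

lemma sform_antisymm (x y : Idx n → R) : sform x y = -sform y x := by
  unfold sform
  rw [← Finset.sum_neg_distrib]
  exact Finset.sum_congr rfl fun k _ => by ring

lemma sform_add_left (x y z : Idx n → R) :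
    sform (x + y) z = sform x z + sform y z := by
  simp only [sform, Pi.add_apply, ← Finset.sum_add_distrib]
  exact Finset.sum_congr rfl fun k _ => by ring

lemma sform_Tesd (w u v : Idx n → R) (a : R) (x : Idx n → R) :
    sform w (Tesd u v a x) =
      sform w x + sform w u * (sform v x + a * sform u x) + sform w v * sform u x :=
  sform_expand w x u v _ _

/-- Additivity relation for ESD-transformations:
`T(u,v₁,a₁)·T(u,v₂,a₂) = T(u, v₁+v₂, a₁+a₂+⟨v₁,v₂⟩)`. -/
theorem esd_additivity (u v₁ v₂ : Idx n → R) (a₁ a₂ : R)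
    (h₁ : sform u v₁ = 0) (h₂ : sform u v₂ = 0) :
    ∀ x : Idx n → R,
      Tesd u v₁ a₁ (Tesd u v₂ a₂ x) = Tesd u (v₁ + v₂) (a₁ + a₂ + sform v₁ v₂) x := by
  intro x
  funext l
  simp only [Tesd, sform_Tesd, sform_self, Pi.add_apply]
  rw [sform_antisymm v₁ u, sform_add_left, h₁, h₂]
  ring
end

section
/- Let R be a commutative ring and a ∈ R. The ideal I = tR_a[t] inside the ring B = R ⋉ tR_a[t] has the property that for every x ∈ I there exists a unique y ∈ I with y·a = x (here a is identified with (a,0) ∈ B); equivalently, multiplication by a is a bijection on I. -/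
open Polynomial

variable {R : Type*} [CommRing R]

/-- The carrier of `B = R ⋉ tR_a[t]`: pairs `(r, f)` with `r ∈ R` and `f ∈ tR_a[t]`
(a polynomial over the localization `R_a` with zero constant term). -/
abbrev Bcar (R : Type*) [CommRing R] (a : R) :=
  R × {f : Polynomial (Localization.Away a) // f.coeff 0 = 0}

/-- Componentwise addition on `B`. -/
noncomputable def badd {a : R} (p q : Bcar R a) : Bcar R a :=
  (p.1 + q.1, ⟨p.2.1 + q.2.1, by simp [p.2.2, q.2.2]⟩)

/-- Multiplication on `B`: `(r,f)·(s,g) = (rs, λ_a(r)g + fλ_a(s) + fg)`. -/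
noncomputable def bmul {a : R} (p q : Bcar R a) : Bcar R a :=
  (p.1 * q.1,
   ⟨Polynomial.C (algebraMap R (Localization.Away a) p.1) * q.2.1 +
      p.2.1 * Polynomial.C (algebraMap R (Localization.Away a) q.1) + p.2.1 * q.2.1,
    by simp [Polynomial.mul_coeff_zero, p.2.2, q.2.2]⟩)

/-- The zero of `B`. -/
noncomputable def bzero {a : R} : Bcar R a := ((0 : R), ⟨0, by simp⟩)

/-- The unit `(1, 0)` of `B`. -/
noncomputable def bone {a : R} : Bcar R a := ((1 : R), ⟨0, by simp⟩)

/-- In `B = R ⋉ tR_a[t]`, multiplication by `a = (a,0)` is a bijection on the ideal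
`I = tR_a[t] = {(0,f)}`: for every `x ∈ I` there is a unique `y ∈ I` with `y·a = x`. -/
theorem mul_by_a_bijective_on_I (a : R) (x : Bcar R a) (hx : x.1 = 0) :
    ∃! y : Bcar R a, y.1 = 0 ∧ bmul y ((a : R), ⟨0, by simp⟩) = x := by
  obtain ⟨u, hu⟩ : IsUnit (algebraMap R (Localization.Away a) a) :=
    IsLocalization.Away.algebraMap_isUnit a
  have hC : (Polynomial.C (↑u⁻¹ : Localization.Away a)) *
      Polynomial.C (algebraMap R (Localization.Away a) a) = 1 := by
    rw [← Polynomial.C_mul, ← hu]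
    simp
  refine ⟨(0, ⟨x.2.1 * Polynomial.C (↑u⁻¹ : Localization.Away a), by simp [x.2.2]⟩),
    ⟨rfl, ?_⟩, ?_⟩
  · unfold bmul
    refine Prod.ext (by simp [hx]) (Subtype.ext ?_)
    simp only
    rw [map_zero, Polynomial.C_0, zero_mul, mul_zero, add_zero, zero_add,
      mul_assoc, hC, mul_one]
  · rintro ⟨y1, y2⟩ ⟨h1, h2⟩
    simp only at h1
    subst h1
    unfold bmul at h2
    have h2' := congrArg (fun p : Bcar R a => p.2.1) h2
    simp only at h2'
    rw [map_zero, Polynomial.C_0, zero_mul, mul_zero, add_zero, zero_add] at h2'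
    refine Prod.ext rfl (Subtype.ext ?_)
    simp only
    rw [← h2', mul_assoc, mul_comm (Polynomial.C (algebraMap R (Localization.Away a) a)), hC, mul_one]
end
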